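/- arXiv:2201.05558 — 4 statements merged into one kernel-verified Lean document; each statement's English description precedes it below -/
import Mathlib

section
/- Mass conservation for the second-moment transport equation: if A(z, ξ) satisfies ∂_z A = (i c_o Ω/ω_0^2)|ξ|^2 A + (ω_0^2/(4(2π)^2 c_o^2)) ∫_{ℝ^2} Ĉ(k)[A(ξ-k) e^{i c_o z k·ζ/ω_0} − A(ξ)] dk with Ω = 0 and ζ = 0, A(0,·) ∈ L^1(ℝ^2), and Ĉ ≥ 0 integrable, then the L^1 norm ∫|A(z,ξ)|dξ satisfies the a priori bound ∫|A(z,ξ)|dξ ≤ ∫|A(0,ξ)|dξ · exp((ω_0^2 C(0)/(2c_o^2)) z), where C(0) = (2π)^{-2}∫ Ĉ(k)dk. -/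
/-!
With `M = ∫ Ĉ` and `c = ω₀² / (4 (2π)² c_o²)`, the equation reads `∂_z A = c (Ĉ ⋆ A - M A)`.
Tonelli and the translation invariance of Lebesgue measure give
`‖∂_z A(z)‖₁ ≤ 2 c M ‖A(z)‖₁`; integrating in `z` pointwise in `ξ` and swapping the integrals
again gives `‖A(z)‖₁ ≤ ‖A(0)‖₁ + 2 c M ∫₀^z ‖A(s)‖₁ ds`, and Grönwall's inequality concludes,
since `2 c M = ω₀² C(0) / (2 c_o²)`. The swaps need joint measurability of `A` and `∂_z A`,
which comes from continuity in `z` (a Carathéodory argument) and from difference quotients.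
-/

open MeasureTheory Real Filter Topology Set Function
open scoped ENNReal

theorem le_mul_exp_of_le_add_mul_integral {f : ℝ → ℝ} {C K T : ℝ} (hf : Continuous f)
    (hK : 0 ≤ K) (hT : 0 ≤ T) (h : ∀ t ∈ Icc 0 T, f t ≤ C + K * ∫ s in 0..t, f s) :
    f T ≤ C * exp (K * T) := by
  set F : ℝ → ℝ := fun t => ∫ s in 0..t, f s
  have hF : ∀ t, HasDerivAt F (f t) t := fun t => (hf.integral_hasStrictDerivAt 0 t).hasDerivAt
  have hFT : F T ≤ gronwallBound 0 K C T := by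
    simpa using le_gronwallBound_of_liminf_deriv_right_le (f := F) (δ := 0) (b := T)
      (fun t _ => (hF t).continuousAt.continuousWithinAt)
      (fun t _ _ hr => (hF t).hasDerivWithinAt.liminf_right_slope_le hr) (by simp [F])
      (fun t ht => by linarith [h t (Ico_subset_Icc_self ht)]) T ⟨hT, le_rfl⟩
  calc f T ≤ C + K * F T := h T ⟨hT, le_rfl⟩
    _ ≤ C + K * gronwallBound 0 K C T := by gcongr
    _ = C * exp (K * T) := by
      rcases hK.eq_or_lt with rfl | hK
      · simp
      · rw [gronwallBound_of_K_ne_0 hK.ne']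
        field_simp
        ring

section Evolution

variable {α E : Type*} [MeasurableSpace α] {μ : Measure α} [NormedAddCommGroup E]

theorem aestronglyMeasurable_uncurry_of_continuous {u : ℝ → α → E}
    (hcont : ∀ x, Continuous fun t => u t x) (hmeas : ∀ t, AEStronglyMeasurable (u t) μ) :
    AEStronglyMeasurable (uncurry u) (volume.prod μ) := by
  -- Off a null set `S`, all rational slices agree with strongly measurable functions;
  -- continuity in `t` transfers this to every slice of `S.indicator ∘ u`.
  obtain ⟨S, hS_ae, hS, hS_rat⟩ :=
    (ae_all_iff.2 fun q : ℚ => (hmeas q).ae_eq_mk).exists_measurable_mem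
  set v : ℝ → α → E := fun t => S.indicator (u t)
  have hv_cont : ∀ x, Continuous fun t => v t x := by
    intro x
    by_cases hx : x ∈ S <;> simp [v, hx, hcont x, continuous_const]
  have hv_rat : ∀ q : ℚ, StronglyMeasurable (v q) := fun q => by
    convert (hmeas q).stronglyMeasurable_mk.indicator hS using 1
    exact indicator_congr fun x hx => hS_rat x hx q
  have hv : ∀ t, StronglyMeasurable (v t) := by
    intro t
    obtain ⟨x, hx_rat, hx_lim⟩ := mem_closure_iff_seq_limit.1 (Rat.denseRange_cast (𝕜 := ℝ) t)
    choose q hq using hx_rat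
    refine stronglyMeasurable_of_tendsto atTop (fun n => hv_rat (q n))
      (tendsto_pi_nhds.2 fun x => ?_)
    simp_rw [hq]
    exact ((hv_cont x).tendsto t).comp hx_lim
  refine (stronglyMeasurable_uncurry_of_continuous_of_stronglyMeasurable hv_cont
    hv).aestronglyMeasurable.congr ?_
  filter_upwards [Measure.quasiMeasurePreserving_snd.ae hS_ae] with p hp
  exact indicator_of_mem hp _

variable [SFinite μ] [NormedSpace ℝ E]

theorem aestronglyMeasurable_uncurry_of_hasDerivAt {u u' : ℝ → α → E}
    (hu : AEStronglyMeasurable (uncurry u) (volume.prod μ))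
    (hderiv : ∀ t x, HasDerivAt (fun s => u s x) (u' t x) t) :
    AEStronglyMeasurable (uncurry u') (volume.prod μ) := by
  have hquot : ∀ n : ℕ, AEStronglyMeasurable
      (fun p : ℝ × α => (n : ℝ) • (u (p.1 + (n : ℝ)⁻¹) p.2 - u p.1 p.2)) (volume.prod μ) :=
    fun n => ((hu.comp_quasiMeasurePreserving ((measurePreserving_add_right volume _).prod
      (MeasurePreserving.id μ)).quasiMeasurePreserving).sub hu).const_smul _
  refine aestronglyMeasurable_of_tendsto_ae atTop hquot (ae_of_all _ fun p => ?_)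
  have hinv : Tendsto (fun n : ℕ => (n : ℝ)⁻¹) atTop (𝓝[≠] 0) :=
    (tendsto_inv_atTop_nhdsGT_zero.comp tendsto_natCast_atTop_atTop).mono_right
      (nhdsWithin_mono _ fun x hx => ne_of_gt hx)
  have hslope := (hasDerivAt_iff_tendsto_slope_zero.1 (hderiv p.1 p.2)).comp hinv
  simp only [comp_def, inv_inv] at hslope
  exact hslope

theorem enorm_sub_le_setLIntegral_enorm_deriv [CompleteSpace E] {f f' : ℝ → E} {a b : ℝ}
    (hab : a ≤ b) (hf : ∀ t ∈ Icc a b, HasDerivAt f (f' t) t) :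
    ‖f b - f a‖ₑ ≤ ∫⁻ t in Ioc a b, ‖f' t‖ₑ := by
  by_cases hI : ∫⁻ t in Ioc a b, ‖f' t‖ₑ = ∞
  · simp [hI]
  have hmeas : AEStronglyMeasurable f' (volume.restrict (Ioc a b)) :=
    (aestronglyMeasurable_deriv f _).congr <| (ae_restrict_mem measurableSet_Ioc).mono
      fun t ht => (hf t (Ioc_subset_Icc_self ht)).deriv
  have hint : IntervalIntegrable f' volume a b :=
    (intervalIntegrable_iff_integrableOn_Ioc_of_le hab).2 ⟨hmeas, lt_top_iff_ne_top.2 hI⟩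
  rw [← intervalIntegral.integral_eq_sub_of_hasDerivAt (by rwa [uIcc_of_le hab]) hint,
    intervalIntegral.integral_of_le hab]
  exact enorm_integral_le_lintegral_enorm _

theorem lintegral_enorm_le_add_setLIntegral [CompleteSpace E] {u u' : ℝ → α → E} {a b : ℝ}
    (hab : a ≤ b) (ha : AEStronglyMeasurable (u a) μ)
    (hu' : AEStronglyMeasurable (uncurry u') (volume.prod μ))
    (hderiv : ∀ t x, HasDerivAt (fun s => u s x) (u' t x) t) :
    ∫⁻ x, ‖u b x‖ₑ ∂μ ≤ ∫⁻ x, ‖u a x‖ₑ ∂μ + ∫⁻ t in Ioc a b, ∫⁻ x, ‖u' t x‖ₑ ∂μ := by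
  have hu'_Ioc : AEMeasurable (uncurry fun t x => ‖u' t x‖ₑ)
      ((volume.restrict (Ioc a b)).prod μ) := by
    rw [← Measure.restrict_univ (μ := μ), Measure.prod_restrict]
    exact hu'.enorm.restrict
  calc ∫⁻ x, ‖u b x‖ₑ ∂μ
      ≤ ∫⁻ x, (‖u a x‖ₑ + ∫⁻ t in Ioc a b, ‖u' t x‖ₑ) ∂μ := lintegral_mono fun x =>
        (show ‖u b x‖ₑ ≤ ‖u a x‖ₑ + ‖u b x - u a x‖ₑ by
          simpa using enorm_add_le (u a x) (u b x - u a x)).trans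
          (add_le_add le_rfl (enorm_sub_le_setLIntegral_enorm_deriv hab fun t _ => hderiv t x))
    _ = ∫⁻ x, ‖u a x‖ₑ ∂μ + ∫⁻ t in Ioc a b, ∫⁻ x, ‖u' t x‖ₑ ∂μ := by
      rw [lintegral_add_left' ha.enorm, lintegral_lintegral_swap hu'_Ioc]

theorem integral_norm_le_mul_exp_of_lintegral_enorm_deriv_le [CompleteSpace E] {u u' : ℝ → α → E}
    {K T : ℝ}
    (hK : 0 ≤ K) (hT : 0 ≤ T) (hu : ∀ t, Integrable (u t) μ)
    (hcont : Continuous fun t => ∫ x, ‖u t x‖ ∂μ)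
    (hderiv : ∀ t x, HasDerivAt (fun s => u s x) (u' t x) t)
    (hbound : ∀ t, ∫⁻ x, ‖u' t x‖ₑ ∂μ ≤ ENNReal.ofReal K * ∫⁻ x, ‖u t x‖ₑ ∂μ) :
    ∫ x, ‖u T x‖ ∂μ ≤ (∫ x, ‖u 0 x‖ ∂μ) * exp (K * T) := by
  set f : ℝ → ℝ := fun t => ∫ x, ‖u t x‖ ∂μ
  have hf_nonneg : ∀ t, 0 ≤ f t := fun t => integral_nonneg fun x => norm_nonneg _
  have hf : ∀ t, ENNReal.ofReal (f t) = ∫⁻ x, ‖u t x‖ₑ ∂μ := fun t =>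
    ofReal_integral_norm_eq_lintegral_enorm (hu t)
  have hu' : AEStronglyMeasurable (uncurry u') (volume.prod μ) :=
    aestronglyMeasurable_uncurry_of_hasDerivAt (aestronglyMeasurable_uncurry_of_continuous
      (fun x => continuous_iff_continuousAt.2 fun t => (hderiv t x).continuousAt)
      fun t => (hu t).1) hderiv
  refine le_mul_exp_of_le_add_mul_integral hcont hK hT fun t ht => ?_
  have hI_nonneg : 0 ≤ ∫ s in Ioc 0 t, f s :=
    setIntegral_nonneg measurableSet_Ioc fun s _ => hf_nonneg s
  rw [intervalIntegral.integral_of_le ht.1, ← ENNReal.ofReal_le_ofReal_iff (by positivity),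
    ENNReal.ofReal_add (hf_nonneg 0) (by positivity), ENNReal.ofReal_mul hK,
    ofReal_integral_eq_lintegral_ofReal hcont.integrableOn_Ioc (ae_of_all _ hf_nonneg),
    hf, hf, ← lintegral_const_mul' _ _ ENNReal.ofReal_ne_top]
  calc ∫⁻ x, ‖u t x‖ₑ ∂μ
      ≤ ∫⁻ x, ‖u 0 x‖ₑ ∂μ + ∫⁻ s in Ioc 0 t, ∫⁻ x, ‖u' s x‖ₑ ∂μ :=
        lintegral_enorm_le_add_setLIntegral ht.1 (hu 0).1 hu' hderiv
    _ ≤ ∫⁻ x, ‖u 0 x‖ₑ ∂μ + ∫⁻ s in Ioc 0 t, ENNReal.ofReal K * ENNReal.ofReal (f s) := by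
      simp_rw [hf]
      gcongr with s
      exact hbound s

end Evolution

theorem lintegral_enorm_integral_mul_sub_le {G 𝕜 : Type*} [AddGroup G] [MeasurableSpace G]
    [MeasurableAdd₂ G] [MeasurableNeg G] {μ : Measure G} [SFinite μ] [μ.IsAddRightInvariant]
    [RCLike 𝕜] {φ a : G → 𝕜} (hφ : AEStronglyMeasurable φ μ) (ha : AEStronglyMeasurable a μ) :
    ∫⁻ ξ, ‖∫ k, φ k * (a (ξ - k) - a ξ) ∂μ‖ₑ ∂μ ≤
      2 * (∫⁻ k, ‖φ k‖ₑ ∂μ) * ∫⁻ ξ, ‖a ξ‖ₑ ∂μ := by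
  have hsub : Measure.QuasiMeasurePreserving (fun p : G × G => p.1 - p.2) (μ.prod μ) μ :=
    Measure.quasiMeasurePreserving_fst.comp
      (measurePreserving_sub_prod μ μ).quasiMeasurePreserving
  have hmeas : AEMeasurable (uncurry fun ξ k => ‖φ k‖ₑ * (‖a (ξ - k)‖ₑ + ‖a ξ‖ₑ)) (μ.prod μ) :=
    (hφ.enorm.comp_quasiMeasurePreserving Measure.quasiMeasurePreserving_snd).mul
      ((ha.enorm.comp_quasiMeasurePreserving hsub).add
        (ha.enorm.comp_quasiMeasurePreserving Measure.quasiMeasurePreserving_fst))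
  calc ∫⁻ ξ, ‖∫ k, φ k * (a (ξ - k) - a ξ) ∂μ‖ₑ ∂μ
      ≤ ∫⁻ ξ, ∫⁻ k, ‖φ k‖ₑ * (‖a (ξ - k)‖ₑ + ‖a ξ‖ₑ) ∂μ ∂μ := by
        gcongr with ξ
        refine (enorm_integral_le_lintegral_enorm _).trans (lintegral_mono fun k => ?_)
        rw [enorm_mul]
        gcongr
        exact enorm_sub_le
    _ = ∫⁻ k, ‖φ k‖ₑ * (2 * ∫⁻ ξ, ‖a ξ‖ₑ ∂μ) ∂μ := by
        rw [lintegral_lintegral_swap hmeas]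
        congr 1 with k
        rw [lintegral_const_mul' _ _ enorm_ne_top, lintegral_add_right' _ ha.enorm,
          lintegral_sub_right_eq_self (fun ξ => ‖a ξ‖ₑ) k, two_mul]
    _ = 2 * (∫⁻ k, ‖φ k‖ₑ ∂μ) * ∫⁻ ξ, ‖a ξ‖ₑ ∂μ := by
        rw [lintegral_mul_const'' _ hφ.enorm]
        ring

theorem stmt_2_general (ω0 co : ℝ)
    (Chat : EuclideanSpace ℝ (Fin 2) → ℝ)
    (hChat_nonneg : ∀ k, 0 ≤ Chat k) (hChat_int : Integrable Chat)
    (C0 : ℝ) (hC0 : C0 = ((2 * π) ^ 2)⁻¹ * ∫ k, Chat k)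
    (A : ℝ → EuclideanSpace ℝ (Fin 2) → ℂ)
    (hA_int : ∀ z, Integrable (A z))
    (hA_cont : Continuous fun z => ∫ ξ, ‖A z ξ‖)
    (hA_eq : ∀ z ξ, HasDerivAt (fun z' => A z' ξ)
      ((ω0 ^ 2 / (4 * (2 * π) ^ 2 * co ^ 2) : ℝ) *
        ∫ k, (Chat k : ℂ) * (A z (ξ - k) - A z ξ)) z) :
    ∀ z : ℝ, 0 ≤ z →
      (∫ ξ, ‖A z ξ‖) ≤ (∫ ξ, ‖A 0 ξ‖) * Real.exp (ω0 ^ 2 * C0 / (2 * co ^ 2) * z) := by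
  set c : ℝ := ω0 ^ 2 / (4 * (2 * π) ^ 2 * co ^ 2)
  set M : ℝ := ∫ k, Chat k
  have hK : ω0 ^ 2 * C0 / (2 * co ^ 2) = c * (2 * M) := by
    rw [hC0]
    ring
  have hChat : ∫⁻ k, ‖(Chat k : ℂ)‖ₑ = ENNReal.ofReal M := by
    simp_rw [← ofReal_norm, Complex.norm_of_nonneg (hChat_nonneg _)]
    exact (ofReal_integral_eq_lintegral_ofReal hChat_int (ae_of_all _ hChat_nonneg)).symm
  intro z hz
  rw [hK]
  refine integral_norm_le_mul_exp_of_lintegral_enorm_deriv_le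
    (mul_nonneg (by positivity) (mul_nonneg zero_le_two (integral_nonneg hChat_nonneg)))
    hz hA_int hA_cont hA_eq fun t => ?_
  calc ∫⁻ ξ, ‖(c : ℂ) * ∫ k, (Chat k : ℂ) * (A t (ξ - k) - A t ξ)‖ₑ
      = ‖(c : ℂ)‖ₑ * ∫⁻ ξ, ‖∫ k, (Chat k : ℂ) * (A t (ξ - k) - A t ξ)‖ₑ := by
        simp_rw [enorm_mul]
        exact lintegral_const_mul' _ _ enorm_ne_top
    _ ≤ ‖(c : ℂ)‖ₑ * (2 * ENNReal.ofReal M * ∫⁻ ξ, ‖A t ξ‖ₑ) := by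
        rw [← hChat]
        gcongr
        exact lintegral_enorm_integral_mul_sub_le
          (Complex.continuous_ofReal.comp_aestronglyMeasurable hChat_int.1) (hA_int t).1
    _ = ENNReal.ofReal (c * (2 * M)) * ∫⁻ ξ, ‖A t ξ‖ₑ := by
        rw [← ofReal_norm, Complex.norm_of_nonneg (by positivity),
          ENNReal.ofReal_mul (by positivity), ENNReal.ofReal_mul zero_le_two, ENNReal.ofReal_ofNat]
        ring

/-- A priori `L¹` bound for the second-moment transport equation with `Ω = 0`, `ζ = 0`. -/
theorem stmt_2 (ω0 co : ℝ) (hω0 : 0 < ω0) (hco : 0 < co)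
    (Chat : EuclideanSpace ℝ (Fin 2) → ℝ)
    (hChat_nonneg : ∀ k, 0 ≤ Chat k) (hChat_int : Integrable Chat)
    (C0 : ℝ) (hC0 : C0 = ((2 * π) ^ 2)⁻¹ * ∫ k, Chat k)
    (A : ℝ → EuclideanSpace ℝ (Fin 2) → ℂ)
    (hA_int : ∀ z, Integrable (A z))
    (hA_cont : Continuous fun z => ∫ ξ, ‖A z ξ‖)
    (hA_eq : ∀ z ξ, HasDerivAt (fun z' => A z' ξ)
      ((ω0 ^ 2 / (4 * (2 * π) ^ 2 * co ^ 2) : ℝ) *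
        ∫ k, (Chat k : ℂ) * (A z (ξ - k) - A z ξ)) z) :
    ∀ z : ℝ, 0 ≤ z →
      (∫ ξ, ‖A z ξ‖) ≤ (∫ ξ, ‖A 0 ξ‖) * Real.exp (ω0 ^ 2 * C0 / (2 * co ^ 2) * z) :=
  stmt_2_general ω0 co Chat hChat_nonneg hChat_int C0 hC0 A hA_int hA_cont hA_eq
end

section
/- Explicit Gaussian ansatz solution of the parabolic PDE: if (a,b,c,d) solve the ODE system a' = −i(4c_oΩ/ω_0^2) b, b' = ω_0^2 D/(16c_o^2) + i(4c_oΩ/ω_0^2) b^2, c' = ω_0 D z/(8c_o) + i(4c_oΩ/ω_0^2) b c, d' = D z^2/16 + i(c_oΩ/ω_0^2) c^2, with zero initial conditions, then Â(z,x,ζ) = (2π)^2 exp(−a(z) − b(z)|x|^2 − c(z) x·ζ − d(z)|ζ|^2) solves ∂_z Â = −(i c_o Ω/ω_0^2) Δ_x Â − (ω_0^2 D/(16 c_o^2)) [|x|^2 + (z^2 c_o^2/ω_0^2)|ζ|^2 + 2(z c_o/ω_0) ζ·x] Â with Â(0,x,ζ) = (2π)^2. -/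
/-!
The `z`-derivative of the ansatz `K exp(-a - b|x|² - c x·ζ - d|ζ|²)` is
`(-a' - b'|x|² - c' x·ζ - d'|ζ|²)` times the ansatz, and its transverse Laplacian is
`(|2b x + c ζ|² - 4b)` times the ansatz. Substituting both into the PDE and comparing the
coefficients of `1`, `|x|²`, `x·ζ` and `|ζ|²` gives exactly the ODE system for `(a, b, c, d)`;
the zero initial data make the ansatz equal to `K = (2π)²` at `z = 0`.
-/

open Real

lemma hasDerivAt_gaussian (K A P Q w : ℂ) :
    HasDerivAt (fun w => K * Complex.exp (A - P * w ^ 2 - Q * w))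
      (-(2 * P * w + Q) * (K * Complex.exp (A - P * w ^ 2 - Q * w))) w := by
  have hexponent : HasDerivAt (fun w => A - P * w ^ 2 - Q * w) (-(2 * P * w + Q)) w :=
    (((hasDerivAt_const w A).sub ((hasDerivAt_pow 2 w).const_mul P)).sub
      ((hasDerivAt_id w).const_mul Q)).congr_deriv (by norm_num; ring)
  exact (hexponent.cexp.const_mul K).congr_deriv (by ring)

lemma deriv_deriv_gaussian_ofReal (K A P Q : ℂ) (x : ℝ) :
    deriv (fun t : ℝ => deriv (fun s : ℝ => K * Complex.exp (A - P * s ^ 2 - Q * s)) t) x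
      = ((2 * P * x + Q) ^ 2 - 2 * P) * (K * Complex.exp (A - P * x ^ 2 - Q * x)) := by
  have hfirst : deriv (fun s : ℝ => K * Complex.exp (A - P * s ^ 2 - Q * s))
      = fun t : ℝ => -(2 * P * t + Q) * (K * Complex.exp (A - P * t ^ 2 - Q * t)) :=
    funext fun t => (hasDerivAt_gaussian K A P Q t).comp_ofReal.deriv
  have hlinear : HasDerivAt (fun w : ℂ => -(2 * P * w + Q)) (-(2 * P)) x :=
    (((hasDerivAt_id (x : ℂ)).const_mul (2 * P)).add_const Q).neg.congr_deriv (by ring)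
  rw [hfirst]
  exact ((hlinear.mul (hasDerivAt_gaussian K A P Q x)).comp_ofReal.deriv).trans (by ring)

noncomputable def gaussianAnsatz (K a b c d : ℂ) (ζ1 ζ2 x1 x2 : ℝ) : ℂ :=
  K * Complex.exp (-a - b * ((x1 ^ 2 + x2 ^ 2 : ℝ) : ℂ)
    - c * ((x1 * ζ1 + x2 * ζ2 : ℝ) : ℂ) - d * ((ζ1 ^ 2 + ζ2 ^ 2 : ℝ) : ℂ))

lemma gaussianAnsatz_zero (K : ℂ) (ζ1 ζ2 x1 x2 : ℝ) :
    gaussianAnsatz K 0 0 0 0 ζ1 ζ2 x1 x2 = K := by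
  simp [gaussianAnsatz]

lemma hasDerivAt_gaussianAnsatz_params (K : ℂ) {a b c d : ℝ → ℂ} {a' b' c' d' : ℂ} {z : ℝ}
    (ha : HasDerivAt a a' z) (hb : HasDerivAt b b' z) (hc : HasDerivAt c c' z)
    (hd : HasDerivAt d d' z) (ζ1 ζ2 x1 x2 : ℝ) :
    HasDerivAt (fun z => gaussianAnsatz K (a z) (b z) (c z) (d z) ζ1 ζ2 x1 x2)
      ((-a' - b' * ((x1 ^ 2 + x2 ^ 2 : ℝ) : ℂ) - c' * ((x1 * ζ1 + x2 * ζ2 : ℝ) : ℂ)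
        - d' * ((ζ1 ^ 2 + ζ2 ^ 2 : ℝ) : ℂ)) * gaussianAnsatz K (a z) (b z) (c z) (d z) ζ1 ζ2 x1 x2)
      z :=
  ((((ha.neg.sub (hb.mul_const ((x1 ^ 2 + x2 ^ 2 : ℝ) : ℂ))).sub
    (hc.mul_const ((x1 * ζ1 + x2 * ζ2 : ℝ) : ℂ))).sub
    (hd.mul_const ((ζ1 ^ 2 + ζ2 ^ 2 : ℝ) : ℂ))).cexp.const_mul K).congr_deriv
    (by simp only [gaussianAnsatz, Pi.sub_apply, Pi.neg_apply]; ring)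

lemma laplacian_gaussianAnsatz (K a b c d : ℂ) (ζ1 ζ2 x1 x2 : ℝ) :
    deriv (fun t => deriv (fun s => gaussianAnsatz K a b c d ζ1 ζ2 s x2) t) x1
      + deriv (fun t => deriv (fun s => gaussianAnsatz K a b c d ζ1 ζ2 x1 s) t) x2
      = ((2 * b * x1 + c * ζ1) ^ 2 + (2 * b * x2 + c * ζ2) ^ 2 - 4 * b)
        * gaussianAnsatz K a b c d ζ1 ζ2 x1 x2 := by
  have hx1 (s : ℝ) : gaussianAnsatz K a b c d ζ1 ζ2 s x2 =
      K * Complex.exp ((-a - b * x2 ^ 2 - c * (x2 * ζ2) - d * (ζ1 ^ 2 + ζ2 ^ 2))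
        - b * s ^ 2 - c * ζ1 * s) := by
    simp only [gaussianAnsatz]
    push_cast
    ring_nf
  have hx2 (s : ℝ) : gaussianAnsatz K a b c d ζ1 ζ2 x1 s =
      K * Complex.exp ((-a - b * x1 ^ 2 - c * (x1 * ζ1) - d * (ζ1 ^ 2 + ζ2 ^ 2))
        - b * s ^ 2 - c * ζ2 * s) := by
    simp only [gaussianAnsatz]
    push_cast
    ring_nf
  rw [funext hx1, funext hx2, deriv_deriv_gaussian_ofReal, deriv_deriv_gaussian_ofReal]
  beta_reduce
  rw [← hx1 x1, ← hx2 x2]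
  ring

theorem stmt_6_general (ω0 co D Ωf : ℝ) (hω0 : 0 < ω0) (hco : 0 < co)
    (ζ1 ζ2 : ℝ)
    (fa fb fc fd : ℝ → ℂ)
    (ha0 : fa 0 = 0) (hb0 : fb 0 = 0) (hc0 : fc 0 = 0) (hd0 : fd 0 = 0)
    (ha : ∀ z, HasDerivAt fa (-Complex.I * (4 * co * Ωf / ω0 ^ 2 : ℝ) * fb z) z)
    (hb : ∀ z, HasDerivAt fb ((ω0 ^ 2 * D / (16 * co ^ 2) : ℝ)
      + Complex.I * (4 * co * Ωf / ω0 ^ 2 : ℝ) * (fb z) ^ 2) z)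
    (hc : ∀ z, HasDerivAt fc ((ω0 * D * z / (8 * co) : ℝ)
      + Complex.I * (4 * co * Ωf / ω0 ^ 2 : ℝ) * fb z * fc z) z)
    (hd : ∀ z, HasDerivAt fd ((D * z ^ 2 / 16 : ℝ)
      + Complex.I * (co * Ωf / ω0 ^ 2 : ℝ) * (fc z) ^ 2) z)
    (Ahat : ℝ → ℝ → ℝ → ℂ)
    (hAhat : ∀ z x1 x2, Ahat z x1 x2 = ((2 * π) ^ 2 : ℝ) *
      Complex.exp (-fa z - fb z * ((x1 ^ 2 + x2 ^ 2 : ℝ) : ℂ)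
        - fc z * ((x1 * ζ1 + x2 * ζ2 : ℝ) : ℂ) - fd z * ((ζ1 ^ 2 + ζ2 ^ 2 : ℝ) : ℂ))) :
    (∀ x1 x2 : ℝ, Ahat 0 x1 x2 = ((2 * π) ^ 2 : ℝ)) ∧
    ∀ z x1 x2 : ℝ,
      deriv (fun z' => Ahat z' x1 x2) z
        = -(Complex.I * (co * Ωf / ω0 ^ 2 : ℝ)) *
            (deriv (fun t => deriv (fun s => Ahat z s x2) t) x1
              + deriv (fun t => deriv (fun s => Ahat z x1 s) t) x2)
          - ((ω0 ^ 2 * D / (16 * co ^ 2) : ℝ) : ℂ) *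
            (((x1 ^ 2 + x2 ^ 2 : ℝ) : ℂ)
              + ((z ^ 2 * co ^ 2 / ω0 ^ 2 * (ζ1 ^ 2 + ζ2 ^ 2) : ℝ) : ℂ)
              + ((2 * z * co / ω0 * (x1 * ζ1 + x2 * ζ2) : ℝ) : ℂ)) * Ahat z x1 x2 := by
  obtain rfl : Ahat = fun z => gaussianAnsatz ((2 * π) ^ 2 : ℝ) (fa z) (fb z) (fc z) (fd z) ζ1 ζ2 :=
    funext₃ hAhat
  refine ⟨fun x1 x2 => ?_, fun z x1 x2 => ?_⟩
  · beta_reduce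
    rw [ha0, hb0, hc0, hd0, gaussianAnsatz_zero]
  · beta_reduce
    rw [laplacian_gaussianAnsatz,
      (hasDerivAt_gaussianAnsatz_params _ (ha z) (hb z) (hc z) (hd z) ζ1 ζ2 x1 x2).deriv]
    have hω : (ω0 : ℂ) ≠ 0 := by exact_mod_cast hω0.ne'
    have hco : (co : ℂ) ≠ 0 := by exact_mod_cast hco.ne'
    push_cast
    field_simp
    ring

/-- The Gaussian ansatz built from the solution of the ODE system solves the parabolic PDE. -/
theorem stmt_6 (ω0 co D Ωf : ℝ) (hω0 : 0 < ω0) (hco : 0 < co) (hD : 0 < D)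
    (ζ1 ζ2 : ℝ)
    (fa fb fc fd : ℝ → ℂ)
    (ha0 : fa 0 = 0) (hb0 : fb 0 = 0) (hc0 : fc 0 = 0) (hd0 : fd 0 = 0)
    (ha : ∀ z, HasDerivAt fa (-Complex.I * (4 * co * Ωf / ω0 ^ 2 : ℝ) * fb z) z)
    (hb : ∀ z, HasDerivAt fb ((ω0 ^ 2 * D / (16 * co ^ 2) : ℝ)
      + Complex.I * (4 * co * Ωf / ω0 ^ 2 : ℝ) * (fb z) ^ 2) z)
    (hc : ∀ z, HasDerivAt fc ((ω0 * D * z / (8 * co) : ℝ)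
      + Complex.I * (4 * co * Ωf / ω0 ^ 2 : ℝ) * fb z * fc z) z)
    (hd : ∀ z, HasDerivAt fd ((D * z ^ 2 / 16 : ℝ)
      + Complex.I * (co * Ωf / ω0 ^ 2 : ℝ) * (fc z) ^ 2) z)
    (Ahat : ℝ → ℝ → ℝ → ℂ)
    (hAhat : ∀ z x1 x2, Ahat z x1 x2 = ((2 * π) ^ 2 : ℝ) *
      Complex.exp (-fa z - fb z * ((x1 ^ 2 + x2 ^ 2 : ℝ) : ℂ)
        - fc z * ((x1 * ζ1 + x2 * ζ2 : ℝ) : ℂ) - fd z * ((ζ1 ^ 2 + ζ2 ^ 2 : ℝ) : ℂ))) :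
    (∀ x1 x2 : ℝ, Ahat 0 x1 x2 = ((2 * π) ^ 2 : ℝ)) ∧
    ∀ z x1 x2 : ℝ,
      deriv (fun z' => Ahat z' x1 x2) z
        = -(Complex.I * (co * Ωf / ω0 ^ 2 : ℝ)) *
            (deriv (fun t => deriv (fun s => Ahat z s x2) t) x1
              + deriv (fun t => deriv (fun s => Ahat z x1 s) t) x2)
          - ((ω0 ^ 2 * D / (16 * co ^ 2) : ℝ) : ℂ) *
            (((x1 ^ 2 + x2 ^ 2 : ℝ) : ℂ)
              + ((z ^ 2 * co ^ 2 / ω0 ^ 2 * (ζ1 ^ 2 + ζ2 ^ 2) : ℝ) : ℂ)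
              + ((2 * z * co / ω0 * (x1 * ζ1 + x2 * ζ2) : ℝ) : ℂ)) * Ahat z x1 x2 :=
  stmt_6_general ω0 co D Ωf hω0 hco ζ1 ζ2 fa fb fc fd ha0 hb0 hc0 hd0 ha hb hc hd Ahat hAhat
end

section
/- Riccati solution: the solution of b'(z) = ω_0^2 D/(16 c_o^2) + i (4 c_o Ω/ω_0^2) b(z)^2 with b(0) = 0, for Ω > 0, is b(z) = (ω_0^2 D z/(16 c_o^2)) · Ψ_b(s(z)) where s(z) = z√(DΩ/(4c_o)) and Ψ_b(s) = tanh(e^{−iπ/4} s)/(e^{−iπ/4} s); equivalently b(z) = e^{iπ/4} √(ω_0^4 D/(64 c_o^3 Ω)) · tanh(e^{−iπ/4} √(DΩ/(4c_o)) z). This function is well-defined and analytic for z ≥ 0 (since cosh(e^{−iπ/4}s) has no zeros on the ray s ≥ 0). -/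
open Real

/-!
Writing `ζ = e^{iπ/4} = (1 + i)/√2`, the function `y x = A tanh (B x)` satisfies
`y' = A B (1 - tanh²) = A B + q y²` as soon as `q A = -B`. For `y' = p + i c y²` take
`A = ζ √(p/c)` and `B = ζ̄ √(p c)`: then `A B = p` because `ζ ζ̄ = 1`, and `i c A = -B`
because `i ζ = -ζ̄`. Here `p = ω₀² D/(16 c_o²)` and `c = 4 c_o Ω/ω₀²`, whose quotient and
product are the two radicands. Finally `cosh w = 0` forces `Re w = 0`, while
`Re (ζ̄ s) = s/√2 > 0` for `s > 0`.
-/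

namespace Real

theorem sqrt_div_mul_sqrt_mul {p c : ℝ} (hp : 0 ≤ p) (hc : 0 < c) :
    √(p / c) * √(p * c) = p := by
  rw [← sqrt_mul (by positivity), show p / c * (p * c) = p * p by field_simp, sqrt_mul_self hp]

theorem mul_sqrt_div {p c : ℝ} (hc : 0 ≤ c) : c * √(p / c) = √(p * c) := by
  rcases hc.eq_or_lt with rfl | hc
  · simp
  rw [show p * c = c ^ 2 * (p / c) by field_simp, sqrt_mul (sq_nonneg c), sqrt_sq hc.le]

end Real

namespace Complex

theorem re_eq_zero_of_cosh_eq_zero {w : ℂ} (h : cosh w = 0) : w.re = 0 := by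
  obtain ⟨k, hk⟩ := cos_eq_zero_iff.mp ((cos_mul_I w).trans h)
  simpa using congrArg im hk

theorem hasDerivAt_tanh {w : ℂ} (hw : cosh w ≠ 0) : HasDerivAt tanh (1 - tanh w ^ 2) w := by
  rw [show (tanh : ℂ → ℂ) = sinh / cosh from funext tanh_eq_sinh_div_cosh]
  refine ((hasDerivAt_sinh w).div (hasDerivAt_cosh w) hw).congr_deriv ?_
  rw [Pi.div_apply, div_pow, one_sub_div (pow_ne_zero 2 hw)]
  ring

theorem hasDerivAt_mul_tanh_mul_riccati {A B q : ℂ} (hq : q * A = -B) {x : ℝ}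
    (hx : cosh (B * x) ≠ 0) :
    HasDerivAt (fun x : ℝ => A * tanh (B * x)) (A * B + q * (A * tanh (B * x)) ^ 2) x := by
  have hlin : HasDerivAt (fun w : ℂ => B * w) B x := by
    simpa using (hasDerivAt_id (x : ℂ)).const_mul B
  refine (((hasDerivAt_tanh hx).comp _ hlin).const_mul A).comp_ofReal.congr_deriv ?_
  linear_combination (-A * tanh (B * x : ℂ) ^ 2) * hq

theorem one_add_I_div_mul_one_sub_I_div_sqrt_two :
    (1 + I) / (√2 : ℝ) * ((1 - I) / (√2 : ℝ)) = 1 := by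
  have h2 : ((√2 : ℝ) : ℂ) ^ 2 = 2 := by norm_cast; simp
  field_simp
  linear_combination -h2 - I_sq

theorem I_mul_one_add_I_div_sqrt_two :
    I * ((1 + I) / (√2 : ℝ)) = -((1 - I) / (√2 : ℝ)) := by
  linear_combination I_sq / ((√2 : ℝ) : ℂ)

theorem cosh_one_sub_I_div_sqrt_two_mul_ne_zero {s : ℝ} (hs : 0 ≤ s) :
    cosh ((1 - I) / (√2 : ℝ) * s) ≠ 0 := by
  rcases hs.eq_or_lt with rfl | hs
  · simp
  refine fun h => (div_pos hs (sqrt_pos.2 two_pos)).ne' ?_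
  simpa [div_re, normSq] using re_eq_zero_of_cosh_eq_zero h

end Complex

open Complex

noncomputable def riccatiTanh (p c x : ℝ) : ℂ :=
  (1 + I) / (√2 : ℝ) * √(p / c) * tanh ((1 - I) / (√2 : ℝ) * √(p * c) * x)

theorem hasDerivAt_riccatiTanh {p c : ℝ} (hp : 0 ≤ p) (hc : 0 < c) {x : ℝ} (hx : 0 ≤ x) :
    HasDerivAt (riccatiTanh p c) (p + I * c * riccatiTanh p c x ^ 2) x := by
  have hq : I * c * ((1 + I) / (√2 : ℝ) * √(p / c)) = -((1 - I) / (√2 : ℝ) * √(p * c)) := by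
    rw [← mul_sqrt_div hc.le]
    push_cast
    linear_combination (c * √(p / c) : ℂ) * I_mul_one_add_I_div_sqrt_two
  have hcosh : cosh ((1 - I) / (√2 : ℝ) * √(p * c) * x) ≠ 0 := by
    simpa [mul_assoc] using cosh_one_sub_I_div_sqrt_two_mul_ne_zero (mul_nonneg (sqrt_nonneg _) hx)
  unfold riccatiTanh
  convert hasDerivAt_mul_tanh_mul_riccati hq hcosh using 2
  have hpc : (√(p / c) * √(p * c) : ℂ) = p := mod_cast sqrt_div_mul_sqrt_mul hp hc
  linear_combination -hpc - (√(p / c) * √(p * c) : ℂ) * one_add_I_div_mul_one_sub_I_div_sqrt_two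

/-- The explicit solution of the Riccati equation
`b' = ω0²D/(16c²) + i(4cΩ/ω0²) b²`, `b(0) = 0`, for `Ω > 0`. -/
theorem stmt_7 (ω0 co D Ωf : ℝ) (hω0 : 0 < ω0) (hco : 0 < co) (hD : 0 < D) (hΩ : 0 < Ωf)
    (b : ℝ → ℂ)
    (hb : ∀ z : ℝ, b z = ((1 + Complex.I) / (Real.sqrt 2 : ℝ)) *
      (Real.sqrt (ω0 ^ 4 * D / (64 * co ^ 3 * Ωf)) : ℝ) *
      Complex.tanh (((1 - Complex.I) / (Real.sqrt 2 : ℝ)) *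
        (Real.sqrt (D * Ωf / (4 * co)) * z : ℝ))) :
    (∀ s : ℝ, 0 ≤ s →
      Complex.cosh (((1 - Complex.I) / (Real.sqrt 2 : ℝ)) * (s : ℂ)) ≠ 0) ∧
    b 0 = 0 ∧
    ∀ z : ℝ, 0 ≤ z →
      HasDerivAt b ((ω0 ^ 2 * D / (16 * co ^ 2) : ℝ)
        + Complex.I * (4 * co * Ωf / ω0 ^ 2 : ℝ) * (b z) ^ 2) z := by
  set C₁ := ω0 ^ 2 * D / (16 * co ^ 2)
  set C₂ := 4 * co * Ωf / ω0 ^ 2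
  have hquot : ω0 ^ 4 * D / (64 * co ^ 3 * Ωf) = C₁ / C₂ := by
    simp only [C₁, C₂]; field_simp; ring
  have hprod : D * Ωf / (4 * co) = C₁ * C₂ := by simp only [C₁, C₂]; field_simp; ring
  have hb' : b = riccatiTanh C₁ C₂ := by
    funext z
    rw [hb, riccatiTanh, hquot, hprod, ofReal_mul, mul_assoc ((1 - I) / _)]
  refine ⟨fun s => cosh_one_sub_I_div_sqrt_two_mul_ne_zero, by simp [hb], fun z hz => ?_⟩
  rw [hb']
  exact hasDerivAt_riccatiTanh (by positivity) (by positivity) hz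
end

section
/- Variance formula for the time-harmonic refocused wave at the origin: for r_0, ρ_0, D, L > 0 and d_0 = D L^3/48, the double Gaussian integral (r_0^2 ρ_0^2/(4π)^2) ∬_{ℝ^2×ℝ^2} exp(−((r_0^2+ρ_0^2)/8)(|ζ_a|^2+|ζ_b|^2) + ((r_0^2−ρ_0^2)/4) ζ_a·ζ_b − d_0(|ζ_a|^2+|ζ_b|^2)) dζ_a dζ_b equals 1/((1 + D L^3/(12 r_0^2))(1 + D L^3/(12 ρ_0^2))). -/
set_option maxHeartbeats 1000000

open MeasureTheory Real
open scoped RealInnerProductSpace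
open GaussianFourier

noncomputable section

abbrev E2 := EuclideanSpace ℝ (Fin 2)

lemma gauss_plain {b : ℝ} (hb : 0 < b) :
    ∫ v : E2, rexp (-b * ‖v‖ ^ 2) = π / b := by
  have h := integral_rexp_neg_mul_sq_norm (V := E2) hb
  simpa using h

lemma integrable_gauss {b : ℝ} (hb : 0 < b) :
    Integrable (fun v : E2 => rexp (-b * ‖v‖ ^ 2)) := by
  have h := (integrable_cexp_neg_mul_sq_norm_add (V := E2) (b := (b : ℂ))
      (by simpa using hb) 0 0).re
  refine h.congr (Filter.Eventually.of_forall fun v => ?_)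
  have : (-(b : ℂ) * (‖v‖ : ℂ) ^ 2 + 0 * ((⟪(0 : E2), v⟫ : ℝ) : ℂ))
      = ((-b * ‖v‖ ^ 2 : ℝ) : ℂ) := by push_cast; ring
  show (Complex.exp _).re = _
  rw [this, Complex.exp_ofReal_re]

lemma gauss_linear {b : ℝ} (hb : 0 < b) (c : ℝ) (w : E2) :
    ∫ v : E2, rexp (-b * ‖v‖ ^ 2 + c * ⟪w, v⟫) =
      (π / b) * rexp (c ^ 2 * ‖w‖ ^ 2 / (4 * b)) := by
  have h := integral_cexp_neg_mul_sq_norm_add (V := E2) (b := (b : ℂ))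
      (by simpa using hb) (c : ℂ) w
  have hrank : ((Module.finrank ℝ E2 : ℂ) / 2) = 1 := by
    simp [finrank_euclideanSpace_fin]
  rw [← Complex.ofReal_inj]
  calc ((∫ v : E2, rexp (-b * ‖v‖ ^ 2 + c * ⟪w, v⟫) : ℝ) : ℂ)
      = ∫ v : E2, Complex.exp (-(b : ℂ) * (‖v‖ : ℂ) ^ 2 + (c : ℂ) * ((⟪w, v⟫ : ℝ) : ℂ)) := by
        rw [show (∫ v : E2, Complex.exp (-(b : ℂ) * (‖v‖ : ℂ) ^ 2 + (c : ℂ) * ((⟪w, v⟫ : ℝ) : ℂ)))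
            = ∫ v : E2, ((rexp (-b * ‖v‖ ^ 2 + c * ⟪w, v⟫) : ℝ) : ℂ) from
          integral_congr_ae (Filter.Eventually.of_forall fun v => by simp only [Complex.ofReal_exp]; push_cast; ring_nf)]
        exact (integral_ofReal (𝕜 := ℂ)).symm
    _ = ((π : ℂ) / b) ^ (((Module.finrank ℝ E2 : ℂ)) / 2) *
          Complex.exp ((c : ℂ) ^ 2 * (‖w‖ : ℂ) ^ 2 / (4 * b)) := h
    _ = (((π / b) * rexp (c ^ 2 * ‖w‖ ^ 2 / (4 * b)) : ℝ) : ℂ) := by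
        rw [hrank, Complex.cpow_one]
        push_cast [Complex.ofReal_exp]
        ring

end

open scoped RealInnerProductSpace

/-- Variance formula for the time-harmonic refocused wave at the origin. -/
theorem stmt_13 (r0 ρ0 D L : ℝ) (hr0 : 0 < r0) (hρ0 : 0 < ρ0) (hD : 0 < D) (hL : 0 < L)
    (d0 : ℝ) (hd0 : d0 = D * L ^ 3 / 48) :
    (r0 ^ 2 * ρ0 ^ 2 / (4 * π) ^ 2) *
      ∫ p : EuclideanSpace ℝ (Fin 2) × EuclideanSpace ℝ (Fin 2),
        Real.exp (-((r0 ^ 2 + ρ0 ^ 2) / 8) * (‖p.1‖ ^ 2 + ‖p.2‖ ^ 2)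
          + ((r0 ^ 2 - ρ0 ^ 2) / 4) * ⟪p.1, p.2⟫
          - d0 * (‖p.1‖ ^ 2 + ‖p.2‖ ^ 2))
    = 1 / ((1 + D * L ^ 3 / (12 * r0 ^ 2)) * (1 + D * L ^ 3 / (12 * ρ0 ^ 2))) := by
  have hd0pos : 0 < d0 := by rw [hd0]; positivity
  obtain ⟨C, hC⟩ : ∃ C : ℝ, C = (r0 ^ 2 + ρ0 ^ 2) / 8 + d0 := ⟨_, rfl⟩
  obtain ⟨β, hβ⟩ : ∃ β : ℝ, β = (r0 ^ 2 - ρ0 ^ 2) / 4 := ⟨_, rfl⟩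
  have hCpos : 0 < C := by rw [hC]; positivity
  have hfac : C ^ 2 - β ^ 2 / 4 = (r0 ^ 2 / 4 + d0) * (ρ0 ^ 2 / 4 + d0) := by
    rw [hC, hβ]; ring
  have hPpos : 0 < (r0 ^ 2 / 4 + d0) * (ρ0 ^ 2 / 4 + d0) :=
    mul_pos (by positivity) (by positivity)
  obtain ⟨C2, hC2⟩ : ∃ C2 : ℝ, C2 = C - β ^ 2 / (4 * C) := ⟨_, rfl⟩
  have hC2pos : 0 < C2 := by
    have he : C2 = (C ^ 2 - β ^ 2 / 4) / C := by
      rw [hC2]; field_simp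
    rw [he, hfac]
    exact div_pos hPpos hCpos
  have hstmt : ∀ p : E2 × E2,
      (-((r0 ^ 2 + ρ0 ^ 2) / 8) * (‖p.1‖ ^ 2 + ‖p.2‖ ^ 2)
        + ((r0 ^ 2 - ρ0 ^ 2) / 4) * ⟪p.1, p.2⟫ - d0 * (‖p.1‖ ^ 2 + ‖p.2‖ ^ 2))
      = (-((r0 ^ 2 + ρ0 ^ 2) / 8) * (‖p.1‖ ^ 2 + ‖p.2‖ ^ 2)
        + β * ⟪p.1, p.2⟫ - d0 * (‖p.1‖ ^ 2 + ‖p.2‖ ^ 2)) := by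
    intro p; rw [hβ]
  simp_rw [hstmt]
  have hcont : Continuous (fun p : E2 × E2 =>
      rexp (-((r0 ^ 2 + ρ0 ^ 2) / 8) * (‖p.1‖ ^ 2 + ‖p.2‖ ^ 2)
        + β * ⟪p.1, p.2⟫ - d0 * (‖p.1‖ ^ 2 + ‖p.2‖ ^ 2))) := by
    apply Real.continuous_exp.comp
    apply Continuous.sub
    · exact (continuous_const.mul ((continuous_fst.norm.pow 2).add
        (continuous_snd.norm.pow 2))).add
        (continuous_const.mul (continuous_fst.inner continuous_snd))
    · exact continuous_const.mul ((continuous_fst.norm.pow 2).add (continuous_snd.norm.pow 2))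
  have hint : Integrable (fun p : E2 × E2 =>
      rexp (-((r0 ^ 2 + ρ0 ^ 2) / 8) * (‖p.1‖ ^ 2 + ‖p.2‖ ^ 2)
        + β * ⟪p.1, p.2⟫ - d0 * (‖p.1‖ ^ 2 + ‖p.2‖ ^ 2)))
      ((volume : Measure E2).prod (volume : Measure E2)) := by
    have hg := (integrable_gauss hd0pos).mul_prod (integrable_gauss hd0pos)
    refine hg.mono' hcont.aestronglyMeasurable ?_
    refine Filter.Eventually.of_forall fun p => ?_
    rw [Real.norm_eq_abs, abs_of_pos (Real.exp_pos _), ← Real.exp_add]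
    apply Real.exp_le_exp.mpr
    have h1 : ⟪p.1, p.2⟫ ≤ ‖p.1‖ * ‖p.2‖ := real_inner_le_norm _ _
    have h2 : -(‖p.1‖ * ‖p.2‖) ≤ ⟪p.1, p.2⟫ := by
      have := abs_real_inner_le_norm p.1 p.2
      nlinarith [abs_le.mp this]
    have h3 : 0 ≤ ‖p.1‖ ^ 2 + ‖p.2‖ ^ 2 - 2 * (‖p.1‖ * ‖p.2‖) := by
      nlinarith [sq_nonneg (‖p.1‖ - ‖p.2‖)]
    have ha : 0 ≤ r0 ^ 2 * (‖p.1‖ ^ 2 + ‖p.2‖ ^ 2 - 2 * ⟪p.1, p.2⟫) := by nlinarith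
    have hb2 : 0 ≤ ρ0 ^ 2 * (‖p.1‖ ^ 2 + ‖p.2‖ ^ 2 + 2 * ⟪p.1, p.2⟫) := by nlinarith
    rw [hβ]; nlinarith
  rw [MeasureTheory.Measure.volume_eq_prod, MeasureTheory.integral_prod _ hint]
  have hinner : ∀ a : E2,
      (∫ b : E2, rexp (-((r0 ^ 2 + ρ0 ^ 2) / 8) * (‖a‖ ^ 2 + ‖b‖ ^ 2)
        + β * ⟪a, b⟫ - d0 * (‖a‖ ^ 2 + ‖b‖ ^ 2)))
      = (π / C) * rexp (-C2 * ‖a‖ ^ 2) := by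
    intro a
    have hrw : ∀ b : E2, (-((r0 ^ 2 + ρ0 ^ 2) / 8) * (‖a‖ ^ 2 + ‖b‖ ^ 2)
        + β * ⟪a, b⟫ - d0 * (‖a‖ ^ 2 + ‖b‖ ^ 2))
        = (-C * ‖b‖ ^ 2 + β * ⟪a, b⟫) + (-C * ‖a‖ ^ 2) := by
      intro b; rw [hC]; ring
    simp_rw [hrw, Real.exp_add, MeasureTheory.integral_mul_const]
    simp only [← Real.exp_add]
    rw [gauss_linear hCpos β a, mul_assoc, ← Real.exp_add]
    congr 1
    rw [hC2]; field_simp; ring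
  simp_rw [hinner]
  rw [MeasureTheory.integral_const_mul, gauss_plain hC2pos]
  have hCC2 : C * C2 = (r0 ^ 2 / 4 + d0) * (ρ0 ^ 2 / 4 + d0) := by
    rw [hC2, ← hfac]; field_simp
  have key : (π / C) * (π / C2) = π ^ 2 / ((r0 ^ 2 / 4 + d0) * (ρ0 ^ 2 / 4 + d0)) := by
    rw [div_mul_div_comm, ← hCC2]; ring_nf
  rw [key, hd0]
  have hπ : π ≠ 0 := Real.pi_ne_zero
  have hr0' : r0 ≠ 0 := hr0.ne'
  have hρ0' : ρ0 ≠ 0 := hρ0.ne'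
  have hA : r0 ^ 2 / 4 + D * L ^ 3 / 48 ≠ 0 := by positivity
  have hB : ρ0 ^ 2 / 4 + D * L ^ 3 / 48 ≠ 0 := by positivity
  have hx : 1 + D * L ^ 3 / (12 * r0 ^ 2) ≠ 0 := by positivity
  have hy : 1 + D * L ^ 3 / (12 * ρ0 ^ 2) ≠ 0 := by positivity
  field_simp
  ring
end
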